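/- If X has density f(x) = exp(−|x|^p/(p μ^p)) / (2 Γ((p+1)/p) p^{1/p} μ) for some μ > 0 and p ≥ 1, then E[|X|^p]^{1/p} = μ and equality holds in the bound E[|X|^p]^{1/p} = 2^{h(X)} / (2 Γ((p+1)/p) (p·e)^{1/p}). -/

import Mathlib

/-!
With `b = (p μ^p)⁻¹`, the substitution `y = b |x|^p` turns both `∫ exp (-b |x|^p)` and
`∫ |x|^p exp (-b |x|^p)` into Gamma integrals; their ratio is `(p b)⁻¹ = μ^p`, which is the
`p`-th moment. Writing the density as `exp (-φ) / C` with `φ x = b |x|^p`, its entropy in nats is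
`∫ f φ + log C = 1/p + log C`, so `2 ^ h = e^(1/p) C`, and dividing by `2 Γ((p+1)/p) (p e)^(1/p)`
leaves `μ`.
-/

open MeasureTheory ProbabilityTheory Real Filter

/-- Differential entropy (base 2) of a density `f` with respect to measure `μ`. -/
noncomputable def dEnt {E : Type*} [MeasurableSpace E] (μ : Measure E) (f : E → ℝ) : ℝ :=
  - ∫ x, f x * Real.logb 2 (f x) ∂μ

/-- `f` is the probability density of `X` with respect to `μ`. -/
def IsDensity {Ω E : Type*} [MeasurableSpace Ω] [MeasurableSpace E]
    (P : Measure Ω) (μ : Measure E) (X : Ω → E) (f : E → ℝ) : Prop :=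
  Measure.map X P = μ.withDensity (fun x => ENNReal.ofReal (f x))

/-- The generalized Gaussian density with shape `p` and scale `μ`. -/
noncomputable def genGaussianDensity (p μ : ℝ) (x : ℝ) : ℝ :=
  Real.exp (-(|x| ^ p) / (p * μ ^ p)) / (2 * Real.Gamma ((p + 1) / p) * p ^ (1 / p) * μ)

open Set

theorem IsDensity.integral_comp {Ω E F : Type*} [MeasurableSpace Ω] [MeasurableSpace E]
    [NormedAddCommGroup F] [NormedSpace ℝ F] {P : Measure Ω} {μ : Measure E} {X : Ω → E}
    {f : E → ℝ} (hdens : IsDensity P μ X f) (hX : AEMeasurable X P) (hf : AEMeasurable f μ)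
    (hf_nonneg : 0 ≤ᵐ[μ] f) {g : E → F} (hg : AEStronglyMeasurable g μ) :
    ∫ ω, g (X ω) ∂P = ∫ x, f x • g x ∂μ := by
  rw [← integral_map hX (hdens ▸ hg.mono_ac (withDensity_absolutelyContinuous _ _)), hdens,
    integral_withDensity_eq_integral_toReal_smul₀ hf.ennreal_ofReal
      (ae_of_all _ fun _ => ENNReal.ofReal_lt_top)]
  refine integral_congr_ae ?_
  filter_upwards [hf_nonneg] with x hx
  rw [ENNReal.toReal_ofReal hx]

theorem two_rpow_dEnt_of_eq_exp_neg_div {E : Type*} [MeasurableSpace E] {μ : Measure E}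
    {f φ : E → ℝ} {C : ℝ} (hC : 0 < C) (hfφ : ∀ x, f x = exp (-φ x) / C)
    (hf : Integrable f μ) (hf_mul_φ : Integrable (fun x => f x * φ x) μ)
    (hf_norm : ∫ x, f x ∂μ = 1) :
    (2 : ℝ) ^ dEnt μ f = exp (∫ x, f x * φ x ∂μ) * C := by
  have hlog : ∀ x, f x * logb 2 (f x) = -(f x * φ x + log C * f x) / log 2 := by
    intro x
    rw [logb, hfφ x, log_div (exp_ne_zero _) hC.ne', log_exp]
    ring
  have hent : dEnt μ f = (∫ x, f x * φ x ∂μ + log C) / log 2 := by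
    simp_rw [dEnt, hlog]
    rw [integral_div, integral_neg, integral_add hf_mul_φ (hf.const_mul _), integral_const_mul,
      hf_norm, mul_one, neg_div, neg_neg]
  rw [hent, rpow_def_of_pos two_pos, mul_div_cancel₀ _ (log_pos one_lt_two).ne', exp_add,
    exp_log hC]

theorem MeasureTheory.IntegrableOn.integrable_comp_abs {E : Type*} [NormedAddCommGroup E] {f : ℝ → E}
    (hf : IntegrableOn f (Ioi 0)) : Integrable fun x => f |x| := by
  have h_Ioi : IntegrableOn (fun x => f |x|) (Ioi 0) :=
    hf.congr_fun (fun x hx => by rw [abs_of_pos hx]) measurableSet_Ioi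
  have h_Iic : IntegrableOn (fun x => f |x|) (Iic 0) := by
    have hneg : MeasurableEmbedding fun x : ℝ => -x := (Homeomorph.neg ℝ).measurableEmbedding
    rw [← Measure.map_neg_eq_self (volume : Measure ℝ), hneg.integrableOn_map_iff]
    simp_rw [Function.comp_def, abs_neg, neg_preimage, neg_Iic, neg_zero]
    exact (integrableOn_Ici_iff_integrableOn_Ioi).mpr h_Ioi
  have := h_Iic.union h_Ioi
  rwa [Iic_union_Ioi, integrableOn_univ] at this

section AbsRpow

variable {p b : ℝ}

theorem integrable_abs_rpow_mul_exp_neg_mul_abs_rpow {s : ℝ} (hs : -1 < s) (hp : 0 < p)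
    (hb : 0 < b) : Integrable fun x : ℝ => |x| ^ s * exp (-b * |x| ^ p) :=
  (integrableOn_rpow_mul_exp_neg_mul_rpow hs hp hb).integrable_comp_abs
    (f := fun y => y ^ s * exp (-b * y ^ p))

theorem integrable_exp_neg_mul_abs_rpow (hp : 0 < p) (hb : 0 < b) :
    Integrable fun x : ℝ => exp (-b * |x| ^ p) := by
  simpa using integrable_abs_rpow_mul_exp_neg_mul_abs_rpow neg_one_lt_zero hp hb

theorem integral_exp_neg_mul_abs_rpow (hp : 0 < p) (hb : 0 < b) :
    ∫ x : ℝ, exp (-b * |x| ^ p) = 2 * b ^ (-1 / p) * Gamma (1 / p + 1) := by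
  rw [integral_comp_abs (f := fun y => exp (-b * y ^ p)), integral_exp_neg_mul_rpow hp hb,
    mul_assoc]

theorem integral_abs_rpow_mul_exp_neg_mul_abs_rpow (hp : 0 < p) (hb : 0 < b) :
    ∫ x : ℝ, |x| ^ p * exp (-b * |x| ^ p) = (p * b)⁻¹ * ∫ x : ℝ, exp (-b * |x| ^ p) := by
  rw [integral_comp_abs (f := fun y => y ^ p * exp (-b * y ^ p)),
    integral_rpow_mul_exp_neg_mul_rpow hp (by linarith) hb, integral_exp_neg_mul_abs_rpow hp hb,
    show -(p + 1) / p = -1 / p + -1 by field_simp; ring, rpow_add hb, rpow_neg_one,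
    show (p + 1) / p = 1 / p + 1 by field_simp; ring]
  field_simp

end AbsRpow

section GenGaussian

variable {p μ : ℝ}

theorem integral_exp_neg_inv_mul_abs_rpow (hp : 0 < p) (hμ : 0 < μ) :
    ∫ x : ℝ, exp (-(p * μ ^ p)⁻¹ * |x| ^ p) = 2 * Gamma ((p + 1) / p) * p ^ (1 / p) * μ := by
  have hscale : ((p * μ ^ p)⁻¹) ^ (-1 / p) = p ^ (1 / p) * μ := by
    rw [inv_rpow (by positivity), ← rpow_neg (by positivity), neg_div, neg_neg,
      mul_rpow hp.le (by positivity), ← rpow_mul hμ.le, mul_one_div_cancel hp.ne', rpow_one]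
  rw [integral_exp_neg_mul_abs_rpow hp (by positivity), hscale,
    show (p + 1) / p = 1 / p + 1 by field_simp; ring]
  ring

theorem genGaussianDensity_eq (x : ℝ) :
    genGaussianDensity p μ x =
      exp (-(p * μ ^ p)⁻¹ * |x| ^ p) / (2 * Gamma ((p + 1) / p) * p ^ (1 / p) * μ) := by
  rw [genGaussianDensity, neg_mul, inv_mul_eq_div, neg_div]

theorem genGaussianDensity_nonneg (hp : 0 < p) (hμ : 0 < μ) (x : ℝ) :
    0 ≤ genGaussianDensity p μ x := by
  rw [genGaussianDensity_eq]
  positivity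

theorem measurable_genGaussianDensity : Measurable (genGaussianDensity p μ) := by
  unfold genGaussianDensity
  fun_prop

theorem integrable_genGaussianDensity_mul_abs_rpow {s : ℝ} (hs : -1 < s) (hp : 0 < p)
    (hμ : 0 < μ) : Integrable fun x => genGaussianDensity p μ x * |x| ^ s := by
  simp_rw [genGaussianDensity_eq, div_mul_eq_mul_div, mul_comm (exp _)]
  exact (integrable_abs_rpow_mul_exp_neg_mul_abs_rpow hs hp (by positivity)).div_const _

theorem integral_genGaussianDensity (hp : 0 < p) (hμ : 0 < μ) :
    ∫ x, genGaussianDensity p μ x = 1 := by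
  simp_rw [genGaussianDensity_eq]
  rw [integral_div, integral_exp_neg_inv_mul_abs_rpow hp hμ, div_self (by positivity)]

theorem integral_genGaussianDensity_mul_abs_rpow (hp : 0 < p) (hμ : 0 < μ) :
    ∫ x, genGaussianDensity p μ x * |x| ^ p = μ ^ p := by
  simp_rw [genGaussianDensity_eq, div_mul_eq_mul_div, mul_comm (exp _)]
  rw [integral_div, integral_abs_rpow_mul_exp_neg_mul_abs_rpow hp (by positivity),
    integral_exp_neg_inv_mul_abs_rpow hp hμ]
  field_simp

theorem two_rpow_dEnt_genGaussianDensity (hp : 0 < p) (hμ : 0 < μ) :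
    (2 : ℝ) ^ dEnt volume (genGaussianDensity p μ) =
      exp (1 / p) * (2 * Gamma ((p + 1) / p) * p ^ (1 / p) * μ) := by
  rw [two_rpow_dEnt_of_eq_exp_neg_div (φ := fun x => |x| ^ p / (p * μ ^ p))
    (C := 2 * Gamma ((p + 1) / p) * p ^ (1 / p) * μ) (by positivity)
    (fun x => by rw [genGaussianDensity, neg_div])
    (by simpa using integrable_genGaussianDensity_mul_abs_rpow neg_one_lt_zero hp hμ)
    (by simpa only [mul_div_assoc] using
      (integrable_genGaussianDensity_mul_abs_rpow (s := p) (by linarith) hp hμ).div_const _)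
    (integral_genGaussianDensity hp hμ)]
  simp_rw [← mul_div_assoc]
  rw [integral_div, integral_genGaussianDensity_mul_abs_rpow hp hμ]
  field_simp

end GenGaussian

theorem genGaussian_achieves_Lp_bound_general {Ω : Type*} [MeasurableSpace Ω]
    (P : Measure Ω)
    (X : Ω → ℝ) (hX : Measurable X)
    (p μ : ℝ) (hp : 1 ≤ p) (hμ : 0 < μ)
    (hf : IsDensity P volume X (genGaussianDensity p μ)) :
    (∫ ω, |X ω| ^ p ∂P) ^ (1 / p) = μ ∧
    (∫ ω, |X ω| ^ p ∂P) ^ (1 / p) =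
      (2 : ℝ) ^ dEnt volume (genGaussianDensity p μ) /
        (2 * Real.Gamma ((p + 1) / p) * (p * Real.exp 1) ^ (1 / p)) := by
  have hp₀ : 0 < p := by linarith
  have hmoment : ∫ ω, |X ω| ^ p ∂P = μ ^ p := by
    rw [hf.integral_comp (g := fun x => |x| ^ p) hX.aemeasurable
      measurable_genGaussianDensity.aemeasurable
      (ae_of_all _ (genGaussianDensity_nonneg hp₀ hμ)) (by fun_prop (disch := exact hp₀.le))]
    exact integral_genGaussianDensity_mul_abs_rpow hp₀ hμ
  have hLp : (∫ ω, |X ω| ^ p ∂P) ^ (1 / p) = μ := by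
    rw [hmoment, ← rpow_mul hμ.le, mul_one_div_cancel hp₀.ne', rpow_one]
  refine ⟨hLp, hLp.trans ?_⟩
  rw [two_rpow_dEnt_genGaussianDensity hp₀ hμ, mul_rpow hp₀.le (exp_pos 1).le, exp_one_rpow]
  field_simp

theorem genGaussian_achieves_Lp_bound {Ω : Type*} [MeasurableSpace Ω]
    (P : Measure Ω) [IsProbabilityMeasure P]
    (X : Ω → ℝ) (hX : Measurable X)
    (p μ : ℝ) (hp : 1 ≤ p) (hμ : 0 < μ)
    (hf : IsDensity P volume X (genGaussianDensity p μ)) :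
    (∫ ω, |X ω| ^ p ∂P) ^ (1 / p) = μ ∧
    (∫ ω, |X ω| ^ p ∂P) ^ (1 / p) =
      (2 : ℝ) ^ dEnt volume (genGaussianDensity p μ) /
        (2 * Real.Gamma ((p + 1) / p) * (p * Real.exp 1) ^ (1 / p)) :=
  genGaussian_achieves_Lp_bound_general P X hX p μ hp hμ hf
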